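/- arXiv:1512.02673 — 5 statements merged into one kernel-verified Lean document; each statement's English description precedes it below -/
import Mathlib

section
/- If the runtime of each of n uncoded parallel subtasks is i.i.d. with CDF F(nt) where F(t) = 1 − e^{−μ(t−1)} for t ≥ 1 (shifted exponential with shift 1 and rate μ), then the expected overall runtime (maximum over the n workers) equals (1/n)(1 + H_n/μ), which is Θ(log n / n). -/
/-!
By independence, `ℙ (max_i T i ≤ t) = F(nt)^n`, which vanishes at `t = 1/n`, so the maximum exceeds
`1/n` almost surely and the layer-cake formula gives
`𝔼[max_i T i] = 1/n + ∫_{1/n}^∞ (1 - (1 - e^{-nμ(t - 1/n)})^n) dt`.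
Expanding `1 - (1 - x)^n = ∑_{k<n} (1 - x)^k x`, the `k`-th term is the derivative of
`(1 - x)^{k+1} / ((k+1) nμ)` with `x = e^{-nμ(t - 1/n)}`, so it integrates to `1 / ((k+1) nμ)`.
-/

open MeasureTheory ProbabilityTheory Set Filter Topology Finset

lemma one_sub_one_sub_pow_eq_sum {R : Type*} [CommRing R] (x : R) (k : ℕ) :
    1 - (1 - x) ^ k = ∑ j ∈ range k, (1 - x) ^ j * x := by
  rw [← geom_sum_mul_neg, sub_sub_cancel, Finset.sum_mul]

section ShiftedExponential

variable {r a : ℝ}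

lemma exp_neg_mul_sub_le_one (hr : 0 ≤ r) {t : ℝ} (ht : a ≤ t) : Real.exp (-r * (t - a)) ≤ 1 :=
  Real.exp_le_one_iff.2 (by nlinarith)

lemma tendsto_exp_neg_mul_sub_atTop (hr : 0 < r) :
    Tendsto (fun t => Real.exp (-r * (t - a))) atTop (𝓝 0) := by
  have hlin : Tendsto (fun t => -r * (t - a)) atTop atBot :=
    tendsto_atBot_add_const_right _ (r * a)
      (tendsto_neg_atTop_atBot.comp (tendsto_id.const_mul_atTop hr)) |>.congr fun t => by
        simp only [Function.comp_apply, id]; ring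
  exact Real.tendsto_exp_atBot.comp hlin

lemma hasDerivAt_one_sub_exp_neg_mul_sub_pow_div (hr : r ≠ 0) (k : ℕ) (t : ℝ) :
    HasDerivAt (fun t => (1 - Real.exp (-r * (t - a))) ^ (k + 1) / ((k + 1) * r))
      ((1 - Real.exp (-r * (t - a))) ^ k * Real.exp (-r * (t - a))) t := by
  have hlin : HasDerivAt (fun t => -r * (t - a)) (-r) t := by
    simpa using ((hasDerivAt_id t).sub_const a).const_mul (-r)
  refine (((hlin.exp.const_sub 1).fun_pow (k + 1)).div_const _).congr_deriv ?_
  push_cast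
  field_simp

lemma one_sub_exp_neg_mul_sub_pow_mul_exp_nonneg (hr : 0 ≤ r) (k : ℕ) {t : ℝ} (ht : a ≤ t) :
    0 ≤ (1 - Real.exp (-r * (t - a))) ^ k * Real.exp (-r * (t - a)) :=
  mul_nonneg (pow_nonneg (sub_nonneg.2 (exp_neg_mul_sub_le_one hr ht)) k) (Real.exp_pos _).le

lemma tendsto_one_sub_exp_neg_mul_sub_pow_div_atTop (hr : 0 < r) (k : ℕ) :
    Tendsto (fun t => (1 - Real.exp (-r * (t - a))) ^ (k + 1) / ((k + 1) * r)) atTop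
      (𝓝 (1 / ((k + 1) * r))) := by
  simpa using (((tendsto_exp_neg_mul_sub_atTop (a := a) hr).const_sub 1).pow (k + 1)).div_const
    ((k + 1) * r)

lemma integrableOn_Ioi_one_sub_exp_neg_mul_sub_pow_mul_exp (hr : 0 < r) (k : ℕ) :
    IntegrableOn (fun t => (1 - Real.exp (-r * (t - a))) ^ k * Real.exp (-r * (t - a)))
      (Ioi a) :=
  integrableOn_Ioi_deriv_of_nonneg'
    (fun t _ => hasDerivAt_one_sub_exp_neg_mul_sub_pow_div hr.ne' k t)
    (fun _ ht => one_sub_exp_neg_mul_sub_pow_mul_exp_nonneg hr.le k ht.le)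
    (tendsto_one_sub_exp_neg_mul_sub_pow_div_atTop hr k)

lemma integral_Ioi_one_sub_exp_neg_mul_sub_pow_mul_exp (hr : 0 < r) (k : ℕ) :
    ∫ t in Ioi a, (1 - Real.exp (-r * (t - a))) ^ k * Real.exp (-r * (t - a)) =
      1 / ((k + 1) * r) := by
  rw [integral_Ioi_of_hasDerivAt_of_nonneg'
    (fun t _ => hasDerivAt_one_sub_exp_neg_mul_sub_pow_div hr.ne' k t)
    (fun _ ht => one_sub_exp_neg_mul_sub_pow_mul_exp_nonneg hr.le k ht.le)
    (tendsto_one_sub_exp_neg_mul_sub_pow_div_atTop hr k)]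
  simp

lemma integrableOn_Ioi_one_sub_one_sub_exp_neg_mul_sub_pow (hr : 0 < r) (n : ℕ) :
    IntegrableOn (fun t => 1 - (1 - Real.exp (-r * (t - a))) ^ n) (Ioi a) := by
  simp_rw [one_sub_one_sub_pow_eq_sum]
  exact integrable_finsetSum _ fun k _ => integrableOn_Ioi_one_sub_exp_neg_mul_sub_pow_mul_exp hr k

lemma integral_Ioi_one_sub_one_sub_exp_neg_mul_sub_pow (hr : 0 < r) (n : ℕ) :
    ∫ t in Ioi a, 1 - (1 - Real.exp (-r * (t - a))) ^ n =
      (∑ k ∈ range n, (1 : ℝ) / (k + 1)) / r := by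
  simp_rw [one_sub_one_sub_pow_eq_sum]
  rw [integral_finsetSum _ fun k _ => integrableOn_Ioi_one_sub_exp_neg_mul_sub_pow_mul_exp hr k,
    Finset.sum_div]
  simp_rw [integral_Ioi_one_sub_exp_neg_mul_sub_pow_mul_exp hr, div_div]

end ShiftedExponential

lemma ProbabilityTheory.iIndepFun.measure_iSup_le {Ω ι : Type*} [MeasurableSpace Ω]
    {P : Measure Ω} [Fintype ι] [Nonempty ι] {X : ι → Ω → ℝ} (hX : iIndepFun X P) (t : ℝ) :
    P {ω | ⨆ i, X i ω ≤ t} = ∏ i, P {ω | X i ω ≤ t} := by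
  have hset : {ω | ⨆ i, X i ω ≤ t} = ⋂ i, X i ⁻¹' Iic t := by
    ext ω
    simp [ciSup_le_iff (Finite.bddAbove_range fun i => X i ω)]
  rw [hset, hX.meas_iInter fun i => ⟨Iic t, measurableSet_Iic, rfl⟩]
  rfl

lemma integral_eq_add_setIntegral_Ioi_of_meas_lt {Ω : Type*} [MeasurableSpace Ω] {P : Measure Ω}
    [IsProbabilityMeasure P] {X : Ω → ℝ} (hX : AEMeasurable X P) {a : ℝ} (ha : 0 ≤ a)
    (hXa : ∀ᵐ ω ∂P, a < X ω) {g : ℝ → ℝ} (hg : IntegrableOn g (Ioi a))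
    (hg_nonneg : ∀ t ∈ Ioi a, 0 ≤ g t)
    (htail : ∀ t ∈ Ioi a, P {ω | t < X ω} = ENNReal.ofReal (g t)) :
    ∫ ω, X ω ∂P = a + ∫ t in Ioi a, g t := by
  have hX_nonneg : 0 ≤ᵐ[P] X := hXa.mono fun ω h => ha.trans h.le
  have hlow : ∀ t ∈ Ioc 0 a, P {ω | t < X ω} = 1 := fun t ht => by
    rw [← measure_univ (μ := P)]
    exact (ae_iff_measure_eq (nullMeasurableSet_lt aemeasurable_const hX)).1
      (hXa.mono fun ω h => ht.2.trans_lt h)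
  rw [integral_eq_lintegral_of_nonneg_ae hX_nonneg hX.aestronglyMeasurable,
    lintegral_eq_lintegral_meas_lt P hX_nonneg hX, ← Ioc_union_Ioi_eq_Ioi ha,
    lintegral_union measurableSet_Ioi (Ioc_disjoint_Ioi le_rfl),
    setLIntegral_congr_fun measurableSet_Ioc hlow, setLIntegral_congr_fun measurableSet_Ioi htail,
    ← ofReal_integral_eq_lintegral_ofReal hg ((ae_restrict_mem measurableSet_Ioi).mono hg_nonneg)]
  have hint_nonneg := setIntegral_nonneg (μ := volume) measurableSet_Ioi hg_nonneg
  rw [setLIntegral_const, Real.volume_Ioc, one_mul, sub_zero, ← ENNReal.ofReal_add ha hint_nonneg,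
    ENNReal.toReal_ofReal (add_nonneg ha hint_nonneg)]

/-- If each of `n` uncoded parallel subtasks has i.i.d. runtime with CDF `F(nt)` where
`F(t) = 1 - e^{-μ(t-1)}` for `t ≥ 1` (shifted exponential), then the expected overall
runtime (the maximum over the `n` workers) equals `(1/n)(1 + H_n/μ)`. -/
theorem expected_runtime_uncoded
    {Ω : Type*} [MeasureSpace Ω] [IsProbabilityMeasure (ℙ : Measure Ω)]
    (n : ℕ) (hn : 0 < n) (μ : ℝ) (hμ : 0 < μ)
    (T : Fin n → Ω → ℝ)
    (hmeas : ∀ i, Measurable (T i))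
    (hindep : iIndepFun T ℙ)
    (hdist : ∀ i, ∀ t : ℝ,
      ℙ {ω | T i ω ≤ t} =
        ENNReal.ofReal (if 1 ≤ (n : ℝ) * t then 1 - Real.exp (-μ * ((n : ℝ) * t - 1)) else 0)) :
    ∫ ω, (⨆ i, T i ω) ∂ℙ =
      (1 / (n : ℝ)) * (1 + (∑ i ∈ Finset.range n, (1 : ℝ) / (i + 1)) / μ) := by
  have : Nonempty (Fin n) := ⟨⟨0, hn⟩⟩
  have hn' : (0 : ℝ) < n := Nat.cast_pos.2 hn
  have hrate : 0 < n * μ := by positivity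
  have hexp : ∀ t : ℝ, -μ * (n * t - 1) = -(n * μ) * (t - 1 / n) := fun t => by field_simp
  have hF : ∀ t, 1 / (n : ℝ) ≤ t → 0 ≤ 1 - Real.exp (-(n * μ) * (t - 1 / n)) :=
    fun t ht => sub_nonneg.2 (exp_neg_mul_sub_le_one hrate.le ht)
  have hcdf : ∀ t, 1 / (n : ℝ) ≤ t → ℙ {ω | ⨆ i, T i ω ≤ t} =
      ENNReal.ofReal ((1 - Real.exp (-(n * μ) * (t - 1 / n))) ^ n) := fun t ht => by
    have h1 : 1 ≤ (n : ℝ) * t := by rwa [← div_le_iff₀' hn']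
    simp_rw [hindep.measure_iSup_le, hdist, if_pos h1, hexp, Finset.prod_const, Finset.card_univ,
      Fintype.card_fin, ENNReal.ofReal_pow (hF t ht)]
  have hmax : Measurable fun ω => ⨆ i, T i ω := Measurable.iSup hmeas
  have hgt : ∀ᵐ ω ∂ℙ, 1 / (n : ℝ) < ⨆ i, T i ω := by
    rw [ae_iff]
    simp only [not_lt]
    rw [hcdf _ le_rfl]
    simp [hn.ne']
  have htail : ∀ t ∈ Ioi (1 / (n : ℝ)), ℙ {ω | t < ⨆ i, T i ω} =
      ENNReal.ofReal (1 - (1 - Real.exp (-(n * μ) * (t - 1 / n))) ^ n) := fun t ht => by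
    have hcompl : {ω | t < ⨆ i, T i ω} = {ω | ⨆ i, T i ω ≤ t}ᶜ := by ext; simp
    rw [hcompl, prob_compl_eq_one_sub (measurableSet_le hmax measurable_const), hcdf t ht.le,
      ENNReal.ofReal_sub 1 (pow_nonneg (hF t ht.le) n), ENNReal.ofReal_one]
  have htail_nonneg : ∀ t ∈ Ioi (1 / (n : ℝ)),
      0 ≤ 1 - (1 - Real.exp (-(n * μ) * (t - 1 / n))) ^ n := fun t ht =>
    sub_nonneg.2 (pow_le_one₀ (hF t ht.le) (sub_le_self _ (Real.exp_pos _).le))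
  rw [integral_eq_add_setIntegral_Ioi_of_meas_lt hmax.aemeasurable (by positivity) hgt
    (integrableOn_Ioi_one_sub_one_sub_exp_neg_mul_sub_pow hrate n) htail_nonneg htail,
    integral_Ioi_one_sub_one_sub_exp_neg_mul_sub_pow hrate n]
  field_simp
end

section
/- Consider h(α) = (1/(αn))(1 + (1/μ) log(1/(1−α))) for α ∈ (0,1), modeling the normalized average runtime of an (n, αn)-MDS-coded algorithm. The unique stationary point α* of h satisfies μ + 1 = 1/(1−α*) − log(1/(1−α*)), equivalently α* = 1 + 1/W_{-1}(−e^{−μ−1}) where W_{-1} is the lower branch of the Lambert W function, and the minimum value of h is −W_{-1}(−e^{−μ−1})/(μn). -/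
/-!
Up to the positive factor `μ n α²`, the derivative of `h` at `α` is `t - log t - (μ + 1)` with
`t = 1/(1-α)`, and `t ↦ t - log t` is strictly increasing on `[1, ∞)`. So `h` decreases and then
increases on `(0,1)`, with a single stationary point. Taking logarithms in `W e^W = -e^{-μ-1}`
shows that `t = -W` solves `t - log t = μ + 1`, i.e. `α* = 1 + 1/W`; and `μ > 0` rules out
`W = -1`, so that `α* ∈ (0,1)`.
-/

open Real Set

theorem strictMonoOn_sub_log : StrictMonoOn (fun t : ℝ => t - log t) (Ici 1) := by
  refine strictMonoOn_of_deriv_pos (convex_Ici 1) ?_ fun t ht => ?_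
  · exact continuousOn_id.sub (continuousOn_log.mono fun t ht => by
      simp only [mem_compl_iff, mem_singleton_iff]; exact (zero_lt_one.trans_le ht).ne')
  · rw [interior_Ici] at ht
    have ht0 : t ≠ 0 := (zero_lt_one.trans ht).ne'
    rw [((hasDerivAt_id' t).fun_sub (hasDerivAt_log ht0)).deriv]
    exact sub_pos.mpr (inv_lt_one_of_one_lt₀ ht)

theorem strictMonoOn_one_div_one_sub_sub_log :
    StrictMonoOn (fun α : ℝ => 1 / (1 - α) - log (1 / (1 - α))) (Ico 0 1) := by
  have hmaps : MapsTo (fun α : ℝ => 1 / (1 - α)) (Ico 0 1) (Ici 1) := fun α ⟨h0, h1⟩ => by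
    simp only [mem_Ici]; rw [le_div_iff₀ (by linarith)]; linarith
  refine strictMonoOn_sub_log.comp (fun _ _ b hb hab => ?_) hmaps
  exact one_div_lt_one_div_of_lt (by linarith [hb.2]) (by linarith)

theorem isMinOn_of_hasDerivAt_nonpos_of_nonneg {f f' : ℝ → ℝ} {a b c : ℝ}
    (hf : ∀ x ∈ Ioo a b, HasDerivAt f (f' x) x) (hc : c ∈ Ioo a b)
    (h_left : ∀ x ∈ Ioo a c, f' x ≤ 0) (h_right : ∀ x ∈ Ioo c b, 0 ≤ f' x) :
    IsMinOn f (Ioo a b) c := by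
  have hcont : ContinuousOn f (Ioo a b) := fun x hx => (hf x hx).continuousAt.continuousWithinAt
  intro x hx
  rcases le_total x c with hxc | hcx
  · have hsub : Icc x c ⊆ Ioo a b := Icc_subset_Ioo hx.1 hc.2
    refine antitoneOn_of_hasDerivWithinAt_nonpos (f' := f') (convex_Icc x c) (hcont.mono hsub)
      (fun y hy => ?_) (fun y hy => ?_) ⟨le_rfl, hxc⟩ ⟨hxc, le_rfl⟩ hxc
    · rw [interior_Icc] at hy ⊢
      exact (hf y (hsub (Ioo_subset_Icc_self hy))).hasDerivWithinAt
    · rw [interior_Icc] at hy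
      exact h_left y ⟨hx.1.trans_le hy.1.le, hy.2⟩
  · have hsub : Icc c x ⊆ Ioo a b := Icc_subset_Ioo hc.1 hx.2
    refine monotoneOn_of_hasDerivWithinAt_nonneg (f' := f') (convex_Icc c x) (hcont.mono hsub)
      (fun y hy => ?_) (fun y hy => ?_) ⟨le_rfl, hcx⟩ ⟨hcx, le_rfl⟩ hcx
    · rw [interior_Icc] at hy ⊢
      exact (hf y (hsub (Ioo_subset_Icc_self hy))).hasDerivWithinAt
    · rw [interior_Icc] at hy
      exact h_right y ⟨hy.1, hy.2.trans hx.2⟩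

theorem neg_sub_log_neg_of_mul_exp_eq {W c : ℝ} (h : W * exp W = -exp (-c)) :
    -W - log (-W) = c := by
  have hW : 0 < -W := by
    have := exp_pos (-c)
    nlinarith [exp_pos W]
  have h' : log (-W * exp W) = -c := by rw [neg_mul, h, neg_neg, log_exp]
  rw [log_mul hW.ne' (exp_ne_zero W), log_exp] at h'
  linarith

noncomputable def mdsRuntime (μ n α : ℝ) : ℝ := 1 / (α * n) * (1 + 1 / μ * log (1 / (1 - α)))

theorem hasDerivAt_mdsRuntime {μ n α : ℝ} (hμ : μ ≠ 0) (hn : n ≠ 0) (hα₀ : α ≠ 0)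
    (hα₁ : α ≠ 1) :
    HasDerivAt (mdsRuntime μ n)
      ((1 / (1 - α) - log (1 / (1 - α)) - (μ + 1)) / (μ * n * α ^ 2)) α := by
  have h1α : 1 - α ≠ 0 := sub_ne_zero.mpr hα₁.symm
  have hrecip : HasDerivAt (fun x : ℝ => 1 / (1 - x)) (1 / (1 - α) ^ 2) α := by
    simpa [one_div] using ((hasDerivAt_id' α).const_sub 1).fun_inv h1α
  have hfactor : HasDerivAt (fun x : ℝ => 1 / (x * n)) (-n / (α * n) ^ 2) α := by
    simpa [one_div] using ((hasDerivAt_id' α).mul_const n).fun_inv (mul_ne_zero hα₀ hn)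
  have hlog := (hrecip.log (one_div_ne_zero h1α)).const_mul (1 / μ) |>.const_add 1
  refine (hfactor.mul hlog).congr_deriv ?_
  rw [log_div one_ne_zero h1α, log_one]
  field_simp
  ring

theorem deriv_mdsRuntime_eq_zero_iff {μ n αs α : ℝ} (hμ : 0 < μ) (hn : 0 < n)
    (hαs : αs ∈ Ioo 0 1) (hψ : 1 / (1 - αs) - log (1 / (1 - αs)) = μ + 1)
    (hα : α ∈ Ioo 0 1) :
    deriv (mdsRuntime μ n) α = 0 ↔ α = αs := by
  have hden : μ * n * α ^ 2 ≠ 0 := by have := hα.1; positivity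
  rw [(hasDerivAt_mdsRuntime hμ.ne' hn.ne' hα.1.ne' hα.2.ne).deriv, div_eq_zero_iff,
    or_iff_left hden, sub_eq_zero, ← hψ]
  exact strictMonoOn_one_div_one_sub_sub_log.injOn.eq_iff (Ioo_subset_Ico_self hα)
    (Ioo_subset_Ico_self hαs)

theorem isMinOn_mdsRuntime {μ n αs : ℝ} (hμ : 0 < μ) (hn : 0 < n) (hαs : αs ∈ Ioo 0 1)
    (hψ : 1 / (1 - αs) - log (1 / (1 - αs)) = μ + 1) :
    IsMinOn (mdsRuntime μ n) (Ioo 0 1) αs := by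
  have hψ_mono := strictMonoOn_one_div_one_sub_sub_log
  refine isMinOn_of_hasDerivAt_nonpos_of_nonneg
    (fun α hα => hasDerivAt_mdsRuntime hμ.ne' hn.ne' hα.1.ne' hα.2.ne) hαs
    (fun α hα => div_nonpos_of_nonpos_of_nonneg ?_ (by positivity))
    (fun α hα => div_nonneg ?_ (by positivity))
  · have := hψ_mono ⟨hα.1.le, hα.2.trans hαs.2⟩ (Ioo_subset_Ico_self hαs) hα.2
    linarith
  · have := hψ_mono (Ioo_subset_Ico_self hαs) ⟨(hαs.1.trans hα.1).le, hα.2⟩ hα.1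
    linarith

/-- Let `h(α) = (1/(αn))(1 + (1/μ) log(1/(1-α)))` on `(0,1)`, modeling the normalized
average runtime of an `(n, αn)`-MDS-coded algorithm.  Let `W` be the value of the lower
branch of the Lambert W function at `-e^{-μ-1}`, i.e. the unique `W ≤ -1` with
`W e^W = -e^{-μ-1}`.  Then the unique stationary point `α*` of `h` in `(0,1)` satisfies
`μ + 1 = 1/(1-α*) - log(1/(1-α*))`, equivalently `α* = 1 + 1/W`, it minimizes `h` on
`(0,1)`, and the minimum value is `-W/(μn)`. -/
theorem optimal_MDS_code
    (μ n : ℝ) (hμ : 0 < μ) (hn : 0 < n)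
    (W : ℝ) (hW1 : W ≤ -1) (hW2 : W * Real.exp W = -Real.exp (-μ - 1)) :
    ∃ αs ∈ Set.Ioo (0 : ℝ) 1,
      (∀ α ∈ Set.Ioo (0 : ℝ) 1,
        (deriv (fun α : ℝ => (1 / (α * n)) * (1 + (1 / μ) * Real.log (1 / (1 - α)))) α = 0
          ↔ α = αs)) ∧
      μ + 1 = 1 / (1 - αs) - Real.log (1 / (1 - αs)) ∧
      αs = 1 + 1 / W ∧
      (∀ α ∈ Set.Ioo (0 : ℝ) 1,
        (1 / (αs * n)) * (1 + (1 / μ) * Real.log (1 / (1 - αs)))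
          ≤ (1 / (α * n)) * (1 + (1 / μ) * Real.log (1 / (1 - α)))) ∧
      (1 / (αs * n)) * (1 + (1 / μ) * Real.log (1 / (1 - αs))) = -W / (μ * n) := by
  have hlog : -W - log (-W) = μ + 1 := neg_sub_log_neg_of_mul_exp_eq (by rwa [neg_add'])
  have hW : W < -1 := by
    rcases hW1.lt_or_eq with hW | rfl
    · exact hW
    · norm_num at hlog; linarith
  have hinv : 1 / (1 - (1 + 1 / W)) = -W := by
    rw [sub_add_cancel_left, one_div_neg_eq_neg_one_div, one_div_one_div]
  have hmem : 1 + 1 / W ∈ Ioo 0 1 := by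
    have : -1 < 1 / W := by rw [lt_div_iff_of_neg (by linarith)]; linarith
    exact ⟨by linarith, by linarith [one_div_neg.mpr (by linarith : W < 0)]⟩
  have hψ : 1 / (1 - (1 + 1 / W)) - log (1 / (1 - (1 + 1 / W))) = μ + 1 := by rwa [hinv]
  refine ⟨1 + 1 / W, hmem, fun α hα => deriv_mdsRuntime_eq_zero_iff hμ hn hmem hψ hα,
    hψ.symm, rfl, isMinOn_iff.mp (isMinOn_mdsRuntime hμ hn hmem hψ), ?_⟩
  have hW0 : W ≠ 0 := by linarith
  have hW1' : W + 1 ≠ 0 := by linarith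
  rw [hinv, show log (-W) = -W - (μ + 1) by linarith]
  field_simp
  ring
end

section
/- For fixed c ∈ (0,1), with p_n = (c − 1/n)/(1 − 1/n), the normalized coded shuffling rate R_c/q = (1/(np_n)²)((1−p_n)^{n+1} + (n−1)p_n(1−p_n) − (1−p_n)²) satisfies n·(R_c/q) → (1−c)/c as n → ∞. -/
/-!
Multiplying out, `n · R_c/q = (1/n)((1-p)^{n+1} - (1-p)²)/p² + (1 - 1/n)(1-p)/p`.
Since `p_n → c` with `|1 - c| < 1`, the power `(1-p_n)^{n+1}` tends to `0`, so the first
term vanishes in the limit and the second tends to `(1-c)/c`.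
-/

open Filter Topology

/-- The normalized coded shuffling rate `R_c / q`. -/
noncomputable def codedShufflingRate (n : ℕ) (p : ℝ) : ℝ :=
  (1 / ((n : ℝ) * p) ^ 2) * ((1 - p) ^ (n + 1) + ((n : ℝ) - 1) * p * (1 - p) - (1 - p) ^ 2)

lemma mul_codedShufflingRate {n : ℕ} (hn : n ≠ 0) (p : ℝ) :
    n * codedShufflingRate n p
      = 1 / n * (((1 - p) ^ (n + 1) - (1 - p) ^ 2) / p ^ 2) + (1 - 1 / n) * ((1 - p) / p) := by
  unfold codedShufflingRate
  rcases eq_or_ne p 0 with rfl | hp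
  · simp
  · field_simp
    ring

lemma tendsto_pow_self_nhds_zero_of_abs_lt_one {q : ℕ → ℝ} {a : ℝ}
    (hq : Tendsto q atTop (𝓝 a)) (ha : |a| < 1) :
    Tendsto (fun n => q n ^ n) atTop (𝓝 0) := by
  obtain ⟨r, har, hr⟩ := exists_between ha
  have hq_le : ∀ᶠ n in atTop, |q n| ≤ r :=
    (continuous_abs.tendsto a).comp hq |>.eventually (eventually_le_nhds har)
  refine squeeze_zero_norm' ?_
    (tendsto_pow_atTop_nhds_zero_of_lt_one ((abs_nonneg a).trans har.le) hr)
  filter_upwards [hq_le] with n hn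
  rw [norm_pow, Real.norm_eq_abs]
  exact pow_le_pow_left₀ (abs_nonneg _) hn n

theorem tendsto_mul_codedShufflingRate {p : ℕ → ℝ} {c : ℝ}
    (hp : Tendsto p atTop (𝓝 c)) (hc : |1 - c| < 1) :
    Tendsto (fun n : ℕ => n * codedShufflingRate n (p n)) atTop (𝓝 ((1 - c) / c)) := by
  have hc0 : c ≠ 0 := by rintro rfl; simp at hc
  have hinv : Tendsto (fun n : ℕ => 1 / (n : ℝ)) atTop (𝓝 0) :=
    tendsto_one_div_atTop_nhds_zero_nat
  have hq : Tendsto (fun n => 1 - p n) atTop (𝓝 (1 - c)) := tendsto_const_nhds.sub hp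
  have hpow : Tendsto (fun n => (1 - p n) ^ (n + 1)) atTop (𝓝 0) := by
    simpa [pow_succ] using (tendsto_pow_self_nhds_zero_of_abs_lt_one hq hc).mul hq
  have hlim : Tendsto (fun n : ℕ => 1 / (n : ℝ) * (((1 - p n) ^ (n + 1) - (1 - p n) ^ 2) / p n ^ 2)
      + (1 - 1 / (n : ℝ)) * ((1 - p n) / p n)) atTop (𝓝 (0 * ((0 - (1 - c) ^ 2) / c ^ 2)
        + (1 - 0) * ((1 - c) / c))) :=
    (hinv.mul ((hpow.sub (hq.pow 2)).div (hp.pow 2) (pow_ne_zero 2 hc0))).add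
      ((tendsto_const_nhds.sub hinv).mul (hq.div hp hc0))
  rw [zero_mul, zero_add, sub_zero, one_mul] at hlim
  refine hlim.congr' ?_
  filter_upwards [eventually_ne_atTop 0] with n hn
  exact (mul_codedShufflingRate hn (p n)).symm

lemma tendsto_sub_one_div_div_one_sub_one_div (c : ℝ) :
    Tendsto (fun n : ℕ => (c - 1 / n) / (1 - 1 / n)) atTop (𝓝 c) := by
  have hinv : Tendsto (fun n : ℕ => 1 / (n : ℝ)) atTop (𝓝 0) :=
    tendsto_one_div_atTop_nhds_zero_nat
  have h : Tendsto (fun n : ℕ => (c - 1 / n) / (1 - 1 / n)) atTop (𝓝 ((c - 0) / (1 - 0))) :=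
    (tendsto_const_nhds.sub hinv).div (tendsto_const_nhds.sub hinv) (by norm_num)
  rwa [sub_zero, sub_zero, div_one] at h

/-- For fixed `c ∈ (0,1)`, with `p_n = (c - 1/n)/(1 - 1/n)`, the normalized coded
shuffling rate `R_c/q = (1/(np_n)²)((1-p_n)^{n+1} + (n-1)p_n(1-p_n) - (1-p_n)²)`
satisfies `n · (R_c/q) → (1-c)/c` as `n → ∞`. -/
theorem coded_shuffling_rate_asymptotic
    (c : ℝ) (hc : c ∈ Set.Ioo (0 : ℝ) 1) :
    Tendsto
      (fun n : ℕ =>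
        (n : ℝ) *
          ((1 / ((n : ℝ) * ((c - 1 / n) / (1 - 1 / n))) ^ 2) *
            ((1 - (c - 1 / n) / (1 - 1 / n)) ^ (n + 1)
              + ((n : ℝ) - 1) * ((c - 1 / n) / (1 - 1 / n)) * (1 - (c - 1 / n) / (1 - 1 / n))
              - (1 - (c - 1 / n) / (1 - 1 / n)) ^ 2)))
      atTop (𝓝 ((1 - c) / c)) := by
  have hc' : |1 - c| < 1 := abs_sub_lt_iff.mpr ⟨by linarith [hc.1], by linarith [hc.2]⟩
  exact tendsto_mul_codedShufflingRate (tendsto_sub_one_div_div_one_sub_one_div c) hc'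
end

section
/- For the shifted exponential mother distribution F(t) = 1 − e^{−μ(t−1)} (t ≥ 1), the CDF of the overall runtime of the n/k-repetition-coded algorithm is F_rep(t) = (1 − (1 − F(kt))^{n/k})^k, and F_rep is stochastically dominated by the MDS CDF: for all t, F_rep(t) ≤ F_MDS(t), where F_MDS(t) is the CDF of the k-th order statistic of n i.i.d. samples from F(k·). -/
open MeasureTheory ProbabilityTheory

/-- The `k`-th smallest value (1-indexed) among `v 0, ..., v (n-1)`. -/
noncomputable def kthSmallest {n : ℕ} (v : Fin n → ℝ) (k : ℕ) : ℝ :=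
  ((List.ofFn v).insertionSort (· ≤ ·)).getD (k - 1) 0

/-- In a sorted list, if more than `j` elements are `≤ t`, the element at index `j` is `≤ t`. -/
lemma sorted_getD_le : ∀ (l : List ℝ) (_ : l.Pairwise (· ≤ ·)) (j : ℕ) (t : ℝ),
    j < l.countP (fun x => decide (x ≤ t)) → l.getD j 0 ≤ t := by
  intro l
  induction l with
  | nil => intro _ j t h; simp at h
  | cons a l ih =>
    intro hs j t h
    cases j with
    | zero =>
      have hpos : 0 < (a :: l).countP (fun x => decide (x ≤ t)) := h
      rw [List.countP_pos_iff] at hpos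
      obtain ⟨x, hx, hxt⟩ := hpos
      have hxt : x ≤ t := by simpa using hxt
      rcases List.mem_cons.mp hx with rfl | hx'
      · simpa using hxt
      · have := List.rel_of_pairwise_cons hs hx'
        simpa using this.trans hxt
    | succ j =>
      have h' : j < l.countP (fun x => decide (x ≤ t)) := by
        rw [List.countP_cons] at h
        split at h <;> omega
      simpa using ih (List.pairwise_cons.mp hs).2 j t h'

lemma kthSmallest_le' {n : ℕ} (v : Fin n → ℝ) (k : ℕ) (hk : 0 < k) (t : ℝ)
    (S : Finset (Fin n)) (hcard : k ≤ S.card) (hS : ∀ i ∈ S, v i ≤ t) :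
    kthSmallest v k ≤ t := by
  set p : ℝ → Bool := fun x => decide (x ≤ t) with hp
  have hcount : k ≤ (List.ofFn v).countP p := by
    have h1 : (List.ofFn v).countP p = (List.finRange n).countP (fun i => p (v i)) := by
      rw [List.ofFn_eq_map, List.countP_map]
      rfl
    have hsub : S.toList ⊆ (List.finRange n).filter (fun i => p (v i)) := by
      intro i hi
      rw [List.mem_filter]
      have hiS : i ∈ S := by simpa using hi
      exact ⟨by simp [List.mem_finRange], by simpa [hp] using hS i hiS⟩
    have hnd : S.toList.Nodup := S.nodup_toList
    have hle := (List.subperm_of_subset hnd hsub).length_le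
    rw [Finset.length_toList] at hle
    rw [h1, List.countP_eq_length_filter]
    omega
  have hsorted : ((List.ofFn v).insertionSort (· ≤ ·)).Pairwise (· ≤ ·) :=
    List.pairwise_insertionSort _ _
  have hperm : ((List.ofFn v).insertionSort (· ≤ ·)).countP p = (List.ofFn v).countP p :=
    (List.perm_insertionSort _ _).countP_eq _
  apply sorted_getD_le _ hsorted
  rw [hperm]
  omega

lemma key_aux {Ω : Type*} [MeasureSpace Ω] [IsProbabilityMeasure (ℙ : Measure Ω)]
    (k m : ℕ) (T : Fin (k * m) → Ω → ℝ) (hmeas : ∀ i, Measurable (T i))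
    (hindep : iIndepFun T ℙ)
    (t p : ℝ) (hp0 : 0 ≤ p) (hp1 : p ≤ 1)
    (hdist : ∀ i, ℙ (T i ⁻¹' Set.Iic t) = ENNReal.ofReal p) :
    ∀ (s c : Finset (Fin k)), Disjoint s c →
      ℙ ((⋂ g ∈ s, ⋃ j : Fin m, T (finProdFinEquiv (g, j)) ⁻¹' Set.Iic t) ∩
         (⋂ g ∈ c, ⋂ j : Fin m, T (finProdFinEquiv (g, j)) ⁻¹' Set.Ioi t)) =
      ENNReal.ofReal ((1 - (1 - p) ^ m) ^ s.card * ((1 - p) ^ m) ^ c.card) := by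
  have hq0 : 0 ≤ 1 - p := by linarith
  have hq1 : 1 - p ≤ 1 := by linarith
  have hqm0 : 0 ≤ (1 - p) ^ m := pow_nonneg hq0 m
  have hqm1 : (1 - p) ^ m ≤ 1 := pow_le_one₀ hq0 hq1
  -- single complement event
  have hsingle : ∀ i, ℙ (T i ⁻¹' Set.Ioi t) = ENNReal.ofReal (1 - p) := by
    intro i
    have : T i ⁻¹' Set.Ioi t = (T i ⁻¹' Set.Iic t)ᶜ := by
      rw [← Set.preimage_compl, Set.compl_Iic]
    rw [this, prob_compl_eq_one_sub ((hmeas i) measurableSet_Iic), hdist i,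
      ← ENNReal.ofReal_one, ← ENNReal.ofReal_sub _ hp0]
  -- measure of pure intersections over groups in c
  have hC : ∀ c : Finset (Fin k),
      ℙ (⋂ g ∈ c, ⋂ j : Fin m, T (finProdFinEquiv (g, j)) ⁻¹' Set.Ioi t) =
      ENNReal.ofReal (((1 - p) ^ m) ^ c.card) := by
    intro c
    set S : Finset (Fin (k * m)) :=
      (c ×ˢ (Finset.univ : Finset (Fin m))).image (fun x => finProdFinEquiv x) with hS
    have hset : (⋂ g ∈ c, ⋂ j : Fin m, T (finProdFinEquiv (g, j)) ⁻¹' Set.Ioi t) =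
        ⋂ i ∈ S, T i ⁻¹' Set.Ioi t := by
      ext ω
      simp only [Set.mem_iInter, hS, Finset.mem_image, Finset.mem_product, Finset.mem_univ,
        and_true, Prod.exists]
      constructor
      · rintro h i ⟨g, j, hg, rfl⟩
        exact h g hg j
      · intro h g hg j
        exact h _ ⟨g, j, hg, rfl⟩
    have hcard : S.card = c.card * m := by
      rw [hS, Finset.card_image_of_injective _ (Equiv.injective _), Finset.card_product,
        Finset.card_univ, Fintype.card_fin]
    rw [hset, hindep.measure_inter_preimage_eq_mul S
      (sets := fun _ => Set.Ioi t) (fun i _ => measurableSet_Ioi)]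
    simp only [hsingle]
    rw [Finset.prod_const, hcard, ← ENNReal.ofReal_pow hq0, ← pow_mul, mul_comm c.card m]
  -- main induction
  intro s
  induction s using Finset.induction_on with
  | empty =>
    intro c _
    simpa using hC c
  | @insert a s ha ih =>
    intro c hdisj
    have hac : a ∉ c := fun h => (Finset.disjoint_left.mp hdisj (Finset.mem_insert_self a s)) h
    have hsc : Disjoint s c := Finset.disjoint_of_subset_left (Finset.subset_insert a s) hdisj
    have hsc' : Disjoint s (insert a c) := by
      rw [Finset.disjoint_insert_right]
      exact ⟨ha, hsc⟩
    set B : Fin k → Set Ω := fun g => ⋃ j : Fin m, T (finProdFinEquiv (g, j)) ⁻¹' Set.Iic t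
      with hB
    set C : Fin k → Set Ω := fun g => ⋂ j : Fin m, T (finProdFinEquiv (g, j)) ⁻¹' Set.Ioi t
      with hCdef
    have hBC : ∀ g, B g = (C g)ᶜ := by
      intro g
      simp only [hB, hCdef, Set.compl_iInter, ← Set.preimage_compl, Set.compl_Ioi]
    have hCmeas : ∀ g, MeasurableSet (C g) :=
      fun g => MeasurableSet.iInter fun j => (hmeas _) measurableSet_Ioi
    set X : Set Ω := (⋂ g ∈ s, B g) ∩ ⋂ g ∈ c, C g with hX
    have hins : (⋂ g ∈ insert a s, B g) ∩ (⋂ g ∈ c, C g) = X \ C a := by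
      rw [Finset.set_biInter_insert, hBC a, hX]
      ext ω; simp only [Set.mem_inter_iff, Set.mem_diff, Set.mem_compl_iff]; tauto
    have hXC : X ∩ C a = (⋂ g ∈ s, B g) ∩ ⋂ g ∈ insert a c, C g := by
      rw [Finset.set_biInter_insert, hX]
      ext ω; simp only [Set.mem_inter_iff]; tauto
    have h1 : ℙ X = ENNReal.ofReal ((1 - (1 - p) ^ m) ^ s.card * ((1 - p) ^ m) ^ c.card) :=
      ih c hsc
    have h2 : ℙ (X ∩ C a) =
        ENNReal.ofReal ((1 - (1 - p) ^ m) ^ s.card * ((1 - p) ^ m) ^ (insert a c).card) := by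
      rw [hXC]; exact ih (insert a c) hsc'
    have hadd := measure_inter_add_diff (μ := (ℙ : Measure Ω)) X (hCmeas a)
    rw [hins]
    rw [h1, h2] at hadd
    have hcards : (insert a c).card = c.card + 1 := Finset.card_insert_of_notMem hac
    have hgoal : ((1 - (1 - p) ^ m) ^ s.card * ((1 - p) ^ m) ^ (insert a c).card)
        + ((1 - (1 - p) ^ m) ^ (insert a s).card * ((1 - p) ^ m) ^ c.card)
        = (1 - (1 - p) ^ m) ^ s.card * ((1 - p) ^ m) ^ c.card := by
      rw [hcards, Finset.card_insert_of_notMem ha]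
      ring
    have hnn : 0 ≤ (1 - (1 - p) ^ m) ^ (insert a s).card * ((1 - p) ^ m) ^ c.card := by
      apply mul_nonneg (pow_nonneg (by linarith) _) (pow_nonneg hqm0 _)
    have hnn2 : 0 ≤ (1 - (1 - p) ^ m) ^ s.card * ((1 - p) ^ m) ^ (insert a c).card := by
      apply mul_nonneg (pow_nonneg (by linarith) _) (pow_nonneg hqm0 _)
    rw [← ENNReal.add_right_inj (a := ENNReal.ofReal
      ((1 - (1 - p) ^ m) ^ s.card * ((1 - p) ^ m) ^ (insert a c).card)) ENNReal.ofReal_ne_top,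
      hadd, ← ENNReal.ofReal_add hnn2 hnn, hgoal]

lemma supInf_le_iff {k m : ℕ} (hk : 0 < k) (hm : 0 < m) (x : Fin k → Fin m → ℝ) (t : ℝ) :
    (⨆ g : Fin k, ⨅ j : Fin m, x g j) ≤ t ↔ ∀ g : Fin k, ∃ j : Fin m, x g j ≤ t := by
  haveI : Nonempty (Fin k) := ⟨⟨0, hk⟩⟩
  haveI : Nonempty (Fin m) := ⟨⟨0, hm⟩⟩
  rw [ciSup_le_iff (Set.finite_range _).bddAbove]
  constructor
  · intro h g
    obtain ⟨j, hj⟩ := exists_eq_ciInf_of_finite (f := x g)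
    exact ⟨j, hj ▸ h g⟩
  · intro h g
    obtain ⟨j, hj⟩ := h g
    exact (ciInf_le (Set.finite_range _).bddBelow j).trans hj

/-- For the shifted-exponential mother distribution `F(t) = 1 - e^{-μ(t-1)}` (`t ≥ 1`),
with `n = k * m` workers each of i.i.d. runtime CDF `F(k·)`:
(1) the CDF of the overall runtime of the `n/k`-repetition-coded algorithm
(max over `k` groups of the min over the `m` workers in each group) is
`F_rep(t) = (1 - (1 - F(kt))^{n/k})^k`, and
(2) it is dominated by the MDS CDF: `P(T_rep ≤ t) ≤ P(T_MDS ≤ t)` for all `t`, where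
`T_MDS` is the `k`-th order statistic of the `n` i.i.d. runtimes. -/
theorem repetition_cdf_and_dominated_by_MDS
    {Ω : Type*} [MeasureSpace Ω] [IsProbabilityMeasure (ℙ : Measure Ω)]
    (k m : ℕ) (hk : 0 < k) (hm : 0 < m) (μ : ℝ) (hμ : 0 < μ)
    (T : Fin (k * m) → Ω → ℝ)
    (hmeas : ∀ i, Measurable (T i))
    (hindep : iIndepFun T ℙ)
    (F : ℝ → ℝ) (hF : ∀ t : ℝ, F t = if 1 ≤ t then 1 - Real.exp (-μ * (t - 1)) else 0)
    (hdist : ∀ i, ∀ t : ℝ, ℙ {ω | T i ω ≤ t} = ENNReal.ofReal (F ((k : ℝ) * t))) :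
    (∀ t : ℝ,
      ℙ {ω | (⨆ g : Fin k, ⨅ j : Fin m, T (finProdFinEquiv (g, j)) ω) ≤ t} =
        ENNReal.ofReal ((1 - (1 - F ((k : ℝ) * t)) ^ m) ^ k)) ∧
    (∀ t : ℝ,
      ℙ {ω | (⨆ g : Fin k, ⨅ j : Fin m, T (finProdFinEquiv (g, j)) ω) ≤ t} ≤
        ℙ {ω | kthSmallest (fun i => T i ω) k ≤ t}) := by
  have hFbounds : ∀ s : ℝ, 0 ≤ F s ∧ F s ≤ 1 := by
    intro s
    rw [hF s]
    split
    · rename_i h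
      have h1 : -μ * (s - 1) ≤ 0 := by nlinarith
      have h2 : Real.exp (-μ * (s - 1)) ≤ 1 := Real.exp_le_one_iff.mpr h1
      have h3 : 0 < Real.exp (-μ * (s - 1)) := Real.exp_pos _
      constructor <;> linarith
    · exact ⟨le_refl 0, zero_le_one⟩
  constructor
  · intro t
    set p := F ((k : ℝ) * t) with hp
    obtain ⟨hp0, hp1⟩ := hFbounds ((k : ℝ) * t)
    have hdist' : ∀ i, ℙ (T i ⁻¹' Set.Iic t) = ENNReal.ofReal p := fun i => hdist i t
    have hset : {ω | (⨆ g : Fin k, ⨅ j : Fin m, T (finProdFinEquiv (g, j)) ω) ≤ t} =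
        (⋂ g ∈ (Finset.univ : Finset (Fin k)),
          ⋃ j : Fin m, T (finProdFinEquiv (g, j)) ⁻¹' Set.Iic t) ∩
        (⋂ g ∈ (∅ : Finset (Fin k)),
          ⋂ j : Fin m, T (finProdFinEquiv (g, j)) ⁻¹' Set.Ioi t) := by
      ext ω
      simp only [Set.mem_setOf_eq, Finset.notMem_empty, Set.iInter_of_empty,
        Set.iInter_univ, Set.inter_univ, Set.mem_iInter, Set.mem_iUnion, Finset.mem_univ,
        Set.iInter_true, Set.mem_preimage, Set.mem_Iic]
      exact supInf_le_iff hk hm (fun g j => T (finProdFinEquiv (g, j)) ω) t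
    rw [hset, key_aux k m T hmeas hindep t p hp0 hp1 hdist' Finset.univ ∅
      (Finset.disjoint_empty_right _)]
    simp [Finset.card_univ]
  · intro t
    apply measure_mono
    intro ω hω
    simp only [Set.mem_setOf_eq] at hω ⊢
    have h := (supInf_le_iff hk hm (fun g j => T (finProdFinEquiv (g, j)) ω) t).mp hω
    choose jf hjf using h
    set sel : Fin k → Fin (k * m) := fun g => finProdFinEquiv (g, jf g) with hsel
    have hinj : Function.Injective sel := by
      intro g₁ g₂ hgg
      have := finProdFinEquiv.injective hgg
      exact (Prod.mk.injEq _ _ _ _ ▸ this).1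
    apply kthSmallest_le' (fun i => T i ω) k hk t (Finset.image sel Finset.univ)
    · rw [Finset.card_image_of_injective _ hinj, Finset.card_univ, Fintype.card_fin]
    · intro i hi
      obtain ⟨g, _, rfl⟩ := Finset.mem_image.mp hi
      exact hjf g
end

section
/- The expected runtime of the (n,k)-MDS-coded algorithm with shifted-exponential tasks, minimized over k (via the optimal k* = α*(μ)n), is Θ(1/n): specifically it equals γ*(μ)/n with γ*(μ) = −W_{-1}(−e^{−μ−1})/μ, a constant depending only on μ; in particular for all μ ≥ 1, γ*(μ) ≤ γ*(1) = −W_{-1}(−e^{−2}). -/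
/-- The lower branch `W₋₁` of the Lambert W function: for `y ∈ (-1/e, 0)` it is the
unique `t ≤ -1` with `t e^t = y` (defined here via `sSup` of the solution set). -/
noncomputable def lambertWm1 (y : ℝ) : ℝ :=
  sSup {t : ℝ | t ≤ -1 ∧ t * Real.exp t = y}

/-- `γ*(μ) = -W₋₁(-e^{-μ-1})/μ`. -/
noncomputable def gammaStar (μ : ℝ) : ℝ := -lambertWm1 (-Real.exp (-μ - 1)) / μ

lemma fmono : StrictMonoOn (fun v : ℝ => v - Real.log v) (Set.Ici 1) := by
  intro a ha b hb hab
  simp only [Set.mem_Ici] at ha hb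
  have h0a : (0:ℝ) < a := by linarith
  have h1 : Real.log b - Real.log a = Real.log (b / a) := (Real.log_div (by linarith) (by linarith)).symm
  have h2 : Real.log (b / a) < b / a - 1 :=
    Real.log_lt_sub_one_of_pos (by positivity) (by
      intro h
      have : b = a := by field_simp at h; linarith
      linarith)
  have h3 : b / a - 1 ≤ b - a := by
    rw [div_sub_one (by linarith)]
    rw [div_le_iff₀ h0a]
    nlinarith
  simp only
  linarith

lemma exists_v (μ : ℝ) (hμ : 0 < μ) :
    ∃ v : ℝ, 1 < v ∧ v - Real.log v = μ + 1 := by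
  set c : ℝ := (μ + 3) ^ 2 with hc
  have h1c : (1:ℝ) ≤ c := by nlinarith
  have hcont : ContinuousOn (fun v : ℝ => v - Real.log v) (Set.Icc 1 c) := by
    apply continuousOn_id.sub
    apply Real.continuousOn_log.mono
    intro x hx
    simp only [Set.mem_compl_iff, Set.mem_singleton_iff]
    have := hx.1
    intro h; rw [h] at this; linarith
  have hmem : μ + 1 ∈ Set.Icc ((fun v : ℝ => v - Real.log v) 1) ((fun v : ℝ => v - Real.log v) c) := by
    constructor
    · simp [Real.log_one]; linarith
    · simp only
      have hlog : Real.log c = 2 * Real.log (μ + 3) := by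
        rw [hc]; rw [Real.log_pow]; push_cast; ring
      have : Real.log (μ + 3) ≤ μ + 2 := by
        have := Real.log_le_sub_one_of_pos (show (0:ℝ) < μ + 3 by linarith)
        linarith
      nlinarith
  obtain ⟨v, hv, hveq⟩ := intermediate_value_Icc h1c hcont hmem
  refine ⟨v, ?_, hveq⟩
  rcases lt_or_eq_of_le hv.1 with h | h
  · exact h
  · exfalso; rw [← h] at hveq; simp [Real.log_one] at hveq; linarith

lemma lambert_eq (μ : ℝ) (hμ : 0 < μ) :
    ∃ v : ℝ, 1 < v ∧ v - Real.log v = μ + 1 ∧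
      lambertWm1 (-Real.exp (-μ - 1)) = -v := by
  obtain ⟨v, hv1, hveq⟩ := exists_v μ hμ
  refine ⟨v, hv1, hveq, ?_⟩
  have hv0 : (0:ℝ) < v := by linarith
  have hset : {t : ℝ | t ≤ -1 ∧ t * Real.exp t = -Real.exp (-μ - 1)} = {-v} := by
    ext t
    simp only [Set.mem_setOf_eq, Set.mem_singleton_iff]
    constructor
    · rintro ⟨ht1, ht2⟩
      have ht0 : (0:ℝ) < -t := by linarith
      have h1 : (-t) * Real.exp t = Real.exp (-μ - 1) := by linarith [ht2]
      have h2 : Real.log (-t) + t = -μ - 1 := by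
        have := congrArg Real.log h1
        rwa [Real.log_mul (by linarith) (Real.exp_ne_zero t), Real.log_exp,
          Real.log_exp] at this
      have h3 : (-t) - Real.log (-t) = μ + 1 := by linarith
      have : (-t) = v := fmono.injOn (Set.mem_Ici.2 (by linarith : (1:ℝ) ≤ -t))
        (Set.mem_Ici.2 hv1.le) (by simp only [h3, hveq])
      linarith
    · rintro rfl
      refine ⟨by linarith, ?_⟩
      have hev : v * Real.exp (-v) = Real.exp (-μ - 1) := by
        have h : Real.exp (Real.log v + -v) = Real.exp (-μ - 1) := by
          congr 1; linarith
        rwa [Real.exp_add, Real.exp_log hv0] at h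
      linarith
  unfold lambertWm1
  rw [hset, csSup_singleton]

/-- The expected runtime `E(k) = (1/k)(1 + (1/μ) log(n/(n-k)))` of the `(n,k)`-MDS-coded
algorithm with shifted-exponential tasks, minimized over real `k ∈ (0,n)`, is attained
at `k* = α*(μ)·n` with `α*(μ) = 1 + 1/W₋₁(-e^{-μ-1})`, and the minimum equals
`γ*(μ)/n` — a constant depending only on `μ` divided by `n`, i.e. `Θ(1/n)`.  Moreover
`γ*` is nonincreasing on `[1,∞)`, so for all `μ ≥ 1`, `γ*(μ) ≤ γ*(1) = -W₋₁(-e^{-2})`. -/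
theorem MDS_optimal_runtime_order
    (μ n : ℝ) (hμ : 0 < μ) (hn : 0 < n) :
    (∀ k : ℝ, 0 < k → k < n →
      (1 / ((1 + 1 / lambertWm1 (-Real.exp (-μ - 1))) * n)) *
          (1 + (1 / μ) * Real.log (n / (n - (1 + 1 / lambertWm1 (-Real.exp (-μ - 1))) * n)))
        ≤ (1 / k) * (1 + (1 / μ) * Real.log (n / (n - k)))) ∧
    (1 / ((1 + 1 / lambertWm1 (-Real.exp (-μ - 1))) * n)) *
        (1 + (1 / μ) * Real.log (n / (n - (1 + 1 / lambertWm1 (-Real.exp (-μ - 1))) * n)))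
      = gammaStar μ / n ∧
    (∀ μ₁ μ₂ : ℝ, 1 ≤ μ₁ → μ₁ ≤ μ₂ → gammaStar μ₂ ≤ gammaStar μ₁) ∧
    gammaStar 1 = -lambertWm1 (-Real.exp (-2)) := by
  obtain ⟨v, hv1, hveq, hl⟩ := lambert_eq μ hμ
  have hv0 : (0:ℝ) < v := by linarith
  have hlogv : Real.log v = v - μ - 1 := by linarith
  rw [hl]
  have hvne : v ≠ 0 := hv0.ne'
  have hv1' : v - 1 ≠ 0 := by intro h; nlinarith
  have halpha : 1 + 1 / (-v) = (v - 1) / v := by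
    have h : 1 / (-v) * v = -1 := by
      rw [div_mul_eq_mul_div, one_mul, div_neg, div_self hvne]
    rw [eq_div_iff hvne, add_mul, one_mul, h]
    ring
  have hnk : n - (1 + 1 / (-v)) * n = n / v := by
    rw [halpha]; field_simp [hvne]; ring
  have hdd : n / (n / v) = v := by
    rw [div_div_eq_mul_div, mul_comm, mul_div_assoc, div_self hn.ne', mul_one]
  have hlogterm : Real.log (n / (n - (1 + 1 / (-v)) * n)) = Real.log v := by
    rw [hnk, hdd]
  have hLHS : (1 / ((1 + 1 / (-v)) * n)) *
      (1 + (1 / μ) * Real.log (n / (n - (1 + 1 / (-v)) * n))) = v / (n * μ) := by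
    rw [hlogterm, hlogv, halpha]
    field_simp
    ring
  refine ⟨?_, ?_, ?_, ?_⟩
  · -- minimality
    intro k hk0 hkn
    rw [hLHS]
    have hnk0 : (0:ℝ) < n - k := by linarith
    have hlog2 : Real.log ((n - k) * v / n) ≤ (n - k) * v / n - 1 :=
      Real.log_le_sub_one_of_pos (by positivity)
    have hsplit : Real.log ((n - k) * v / n) =
        Real.log (n - k) + Real.log v - Real.log n := by
      rw [Real.log_div (by positivity) hn.ne', Real.log_mul hnk0.ne' hv0.ne']
    have hLdef : Real.log (n / (n - k)) = Real.log n - Real.log (n - k) :=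
      Real.log_div hn.ne' hnk0.ne'
    set q : ℝ := (n - k) * v / n with hqdef
    have hq : q * n = (n - k) * v := by rw [hqdef]; field_simp
    have hLlb : v * k ≤ (Real.log (n / (n - k)) + μ) * n := by
      have h5 : Real.log (n / (n - k)) + μ ≥ v - q := by
        rw [hLdef]; rw [hsplit] at hlog2; linarith
      nlinarith [mul_le_mul_of_nonneg_right h5 hn.le]
    have hX : v * k / (n * μ) ≤ 1 + (1 / μ) * Real.log (n / (n - k)) := by
      rw [div_le_iff₀ (by positivity)]
      have h6 : (1 + (1 / μ) * Real.log (n / (n - k))) * (n * μ)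
          = (Real.log (n / (n - k)) + μ) * n := by field_simp; ring
      rw [h6]; exact hLlb
    calc v / (n * μ) = (1 / k) * (v * k / (n * μ)) := by
          field_simp
      _ ≤ (1 / k) * (1 + (1 / μ) * Real.log (n / (n - k))) :=
          mul_le_mul_of_nonneg_left hX (by positivity)
  · -- value
    rw [hLHS]
    unfold gammaStar
    rw [hl]
    ring
  · -- monotonicity
    intro μ₁ μ₂ h1 h12
    obtain ⟨v₁, hw1, he1, hl1⟩ := lambert_eq μ₁ (by linarith)
    obtain ⟨v₂, hw2, he2, hl2⟩ := lambert_eq μ₂ (by linarith)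
    have hp1 : (0:ℝ) < v₁ := by linarith
    have hp2 : (0:ℝ) < v₂ := by linarith
    have hμ1 : (0:ℝ) < μ₁ := by linarith
    have hμ2 : (0:ℝ) < μ₂ := by linarith
    have hg1 : gammaStar μ₁ = v₁ / μ₁ := by unfold gammaStar; rw [hl1]; ring
    have hg2 : gammaStar μ₂ = v₂ / μ₂ := by unfold gammaStar; rw [hl2]; ring
    rw [hg1, hg2]
    have hle : v₁ ≤ v₂ := by
      by_contra h
      push_neg at h
      have := fmono (Set.mem_Ici.2 hw2.le) (Set.mem_Ici.2 hw1.le) h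
      simp only at this
      rw [he1, he2] at this
      linarith
    have htan : Real.log (v₂ / v₁) ≤ v₂ / v₁ - 1 :=
      Real.log_le_sub_one_of_pos (by positivity)
    rw [Real.log_div hp2.ne' hp1.ne'] at htan
    have h1' : v₁ * (Real.log v₂ - Real.log v₁) ≤ v₂ - v₁ := by
      have := mul_le_mul_of_nonneg_left htan hp1.le
      have hc : v₁ * (v₂ / v₁ - 1) = v₂ - v₁ := by field_simp
      linarith [hc ▸ this]
    have hlognn : 0 ≤ Real.log v₁ := Real.log_nonneg hw1.le
    rw [div_le_div_iff₀ hμ2 hμ1]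
    have hm1 : μ₁ = v₁ - Real.log v₁ - 1 := by linarith
    have hm2 : μ₂ = v₂ - Real.log v₂ - 1 := by linarith
    rw [hm1, hm2]
    nlinarith [mul_le_mul_of_nonneg_right hle hlognn]
  · -- gammaStar 1
    unfold gammaStar
    norm_num
end
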